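/- arXiv:2601.22766 — 7 statements merged into one kernel-verified Lean document; each statement's English description precedes it below -/
import Mathlib

section
/- For any z ∈ R^m, there exists a unique τ ∈ R such that Σ_i max(z_i − τ, 0) = 1. -/
theorem stmt2 (m : ℕ) (hm : 0 < m) (z : Fin m → ℝ) :
    ∃! τ : ℝ, ∑ i, max (z i - τ) 0 = 1 := by
  haveI : Nonempty (Fin m) := ⟨⟨0, hm⟩⟩
  set f : ℝ → ℝ := fun τ => ∑ i, max (z i - τ) 0 with hf
  have hcont : Continuous f :=
    continuous_finset_sum _ fun i _ =>
      ((continuous_const.sub continuous_id).max continuous_const)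
  -- key monotonicity / strictness lemma
  have key : ∀ x y : ℝ, x < y → f y = 1 → f x = 1 → False := by
    intro x y hxy hy hx
    have hex : ∃ i : Fin m, 0 < max (z i - y) 0 := by
      by_contra h
      push_neg at h
      have h0 : f y = 0 :=
        Finset.sum_eq_zero fun i _ => le_antisymm (h i) (le_max_right _ _)
      rw [hy] at h0; norm_num at h0
    obtain ⟨i, hi⟩ := hex
    have hzy : 0 < z i - y := (lt_max_iff.1 hi).resolve_right (lt_irrefl 0)
    have hlt : f y < f x := by
      apply Finset.sum_lt_sum
      · intro j _
        exact max_le_max (by linarith) le_rfl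
      · refine ⟨i, Finset.mem_univ i, ?_⟩
        calc max (z i - y) 0 = z i - y := max_eq_left hzy.le
          _ < z i - x := by linarith
          _ ≤ max (z i - x) 0 := le_max_left _ _
    rw [hx, hy] at hlt; exact lt_irrefl _ hlt
  -- existence via IVT
  set a : ℝ := (Finset.univ.inf' Finset.univ_nonempty z) - 1 with ha
  set b : ℝ := Finset.univ.sup' Finset.univ_nonempty z with hb
  have hab : a ≤ b := by
    have h1 := Finset.inf'_le z (Finset.mem_univ (⟨0, hm⟩ : Fin m))
    have h2 := Finset.le_sup' z (Finset.mem_univ (⟨0, hm⟩ : Fin m))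
    simp only [ha, hb]; linarith
  have hfb : f b = 0 :=
    Finset.sum_eq_zero fun i _ =>
      max_eq_right (sub_nonpos.2 (Finset.le_sup' z (Finset.mem_univ i)))
  have hfa : 1 ≤ f a := by
    have hterm : ∀ i ∈ Finset.univ, (1 : ℝ) ≤ max (z i - a) 0 := by
      intro i _
      have := Finset.inf'_le z (Finset.mem_univ i)
      exact le_max_of_le_left (by simp only [ha]; linarith)
    calc (1 : ℝ) ≤ (m : ℝ) := by exact_mod_cast hm
      _ = ∑ _i : Fin m, (1 : ℝ) := by simp
      _ ≤ f a := Finset.sum_le_sum hterm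
  have hmem : (1 : ℝ) ∈ Set.Icc (f b) (f a) := ⟨by rw [hfb]; norm_num, hfa⟩
  obtain ⟨τ, _, hτ⟩ := intermediate_value_Icc' hab hcont.continuousOn hmem
  refine ⟨τ, hτ, fun τ' hτ' => ?_⟩
  rcases lt_trichotomy τ' τ with h | h | h
  · exact absurd hτ (fun _ => key τ' τ h hτ hτ')
  · exact h
  · exact absurd hτ' (fun _ => key τ τ' h hτ' hτ)
end

section
/- Let z ∈ R^m and let τ be the unique real number with Σ_i [z_i − τ]_+ = 1. Then the vector p with p_i = [z_i − τ]_+ is the Euclidean projection of z onto the probability simplex Δ_m = {p ∈ R^m : p ≥ 0, Σ_i p_i = 1}, i.e., p = argmin_{p ∈ Δ_m} (1/2)‖z − p‖². -/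
theorem stmt3 (m : ℕ) (hm : 0 < m) (z : Fin m → ℝ) (τ : ℝ)
    (hτ : ∑ i, max (z i - τ) 0 = 1)
    (p : Fin m → ℝ) (hp : ∀ i, p i = max (z i - τ) 0) :
    (∀ i, 0 ≤ p i) ∧ (∑ i, p i = 1) ∧
      (∀ p' : Fin m → ℝ, (∀ i, 0 ≤ p' i) → (∑ i, p' i = 1) →
        (1/2) * ∑ i, (z i - p i)^2 ≤ (1/2) * ∑ i, (z i - p' i)^2) := by
  have hnn : ∀ i, 0 ≤ p i := fun i => by rw [hp i]; exact le_max_right _ _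
  have hsum : ∑ i, p i = 1 := by simp_rw [hp]; exact hτ
  refine ⟨hnn, hsum, fun q hq1 hq2 => ?_⟩
  have key : ∀ i, (z i - p i) * p i = τ * p i := by
    intro i
    rw [hp i]
    rcases le_or_gt τ (z i) with h | h
    · rw [max_eq_left (by linarith)]; ring
    · rw [max_eq_right (by linarith)]; ring
  have key2 : ∀ i, (z i - p i) * q i ≤ τ * q i := by
    intro i
    have hle : z i - p i ≤ τ := by
      rw [hp i]
      rcases le_or_gt τ (z i) with h | h
      · rw [max_eq_left (by linarith)]; linarith
      · rw [max_eq_right (by linarith)]; linarith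
    exact mul_le_mul_of_nonneg_right hle (hq1 i)
  have vi : ∑ i, (z i - p i) * (q i - p i) ≤ 0 := by
    have hsplit : ∑ i, (z i - p i) * (q i - p i)
        = ∑ i, (z i - p i) * q i - ∑ i, (z i - p i) * p i := by
      rw [← Finset.sum_sub_distrib]; congr 1; ext i; ring
    rw [hsplit]
    have h1 : ∑ i, (z i - p i) * q i ≤ τ := by
      calc ∑ i, (z i - p i) * q i ≤ ∑ i, τ * q i :=
            Finset.sum_le_sum (fun i _ => key2 i)
        _ = τ := by rw [← Finset.mul_sum, hq2, mul_one]
    have h2 : ∑ i, (z i - p i) * p i = τ := by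
      calc ∑ i, (z i - p i) * p i = ∑ i, τ * p i :=
            Finset.sum_congr rfl (fun i _ => key i)
        _ = τ := by rw [← Finset.mul_sum, hsum, mul_one]
    linarith
  have expand : ∑ i, (z i - q i)^2
      = ∑ i, (z i - p i)^2 + ∑ i, (p i - q i)^2
        - 2 * ∑ i, (z i - p i) * (q i - p i) := by
    rw [Finset.mul_sum, ← Finset.sum_add_distrib, ← Finset.sum_sub_distrib]
    congr 1; ext i; ring
  have hsq : 0 ≤ ∑ i, (p i - q i)^2 := Finset.sum_nonneg fun i _ => sq_nonneg _
  nlinarith [vi, hsq, expand]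
end

section
/- For any z ∈ R^m and real r ≥ 1, there exists a unique τ ∈ R such that Σ_i ([z_i/r − τ]_+)^r = 1. -/
theorem stmt4 (m : ℕ) (hm : 0 < m) (z : Fin m → ℝ) (r : ℝ) (hr : 1 ≤ r) :
    ∃! τ : ℝ, ∑ i, (max (z i / r - τ) 0) ^ r = 1 := by
  have hr0 : (0:ℝ) < r := lt_of_lt_of_le one_pos hr
  haveI : Nonempty (Fin m) := ⟨⟨0, hm⟩⟩
  have hne : (Finset.univ : Finset (Fin m)).Nonempty := Finset.univ_nonempty
  set f : ℝ → ℝ := fun τ => ∑ i, (max (z i / r - τ) 0) ^ r with hf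
  have hcont : Continuous f := by
    apply continuous_finset_sum
    intro i _
    have h1 : Continuous fun τ : ℝ => max (z i / r - τ) 0 :=
      (continuous_const.sub continuous_id).max continuous_const
    exact continuous_iff_continuousAt.mpr fun τ =>
      (Real.continuousAt_rpow_const _ _ (Or.inr hr0.le)).comp h1.continuousAt
  -- strict decrease
  have hstrict : ∀ a b : ℝ, a < b → f a = 1 → f b < f a := by
    intro a b hab ha
    have hpos : ∃ i : Fin m, 0 < z i / r - a := by
      by_contra h
      push_neg at h
      have : f a = 0 := by
        apply Finset.sum_eq_zero
        intro i _
        rw [max_eq_right (h i), Real.zero_rpow (ne_of_gt hr0)]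
      rw [this] at ha; norm_num at ha
    obtain ⟨i, hi⟩ := hpos
    apply Finset.sum_lt_sum
    · intro j _
      apply Real.rpow_le_rpow (le_max_right _ _) _ hr0.le
      exact max_le_max (by linarith) le_rfl
    · refine ⟨i, Finset.mem_univ i, ?_⟩
      have hA : max (z i / r - a) 0 = z i / r - a := max_eq_left hi.le
      rw [hA]
      rcases le_or_gt (z i / r - b) 0 with h | h
      · rw [max_eq_right h, Real.zero_rpow (ne_of_gt hr0)]
        exact Real.rpow_pos_of_pos hi r
      · rw [max_eq_left h.le]
        exact Real.rpow_lt_rpow h.le (by linarith) hr0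
  -- existence
  set A : ℝ := (Finset.univ.inf' hne fun i => z i / r) - 1 with hA
  set B : ℝ := Finset.univ.sup' hne fun i => z i / r with hB
  have hAB : A ≤ B := by
    obtain ⟨i, _⟩ := hne
    have h1 := Finset.inf'_le (fun i => z i / r) (Finset.mem_univ i)
    have h2 := Finset.le_sup' (fun i => z i / r) (Finset.mem_univ i)
    simp only [hA, hB]; linarith
  have hfB : f B = 0 := by
    apply Finset.sum_eq_zero
    intro i _
    have : z i / r - B ≤ 0 := by
      have := Finset.le_sup' (fun i => z i / r) (Finset.mem_univ i)
      linarith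
    rw [max_eq_right this, Real.zero_rpow (ne_of_gt hr0)]
  have hfA : 1 ≤ f A := by
    have : ∀ i ∈ Finset.univ, (1:ℝ) ≤ (max (z i / r - A) 0) ^ r := by
      intro i _
      have h1 : 1 ≤ z i / r - A := by
        have := Finset.inf'_le (fun i => z i / r) (Finset.mem_univ i)
        simp only [hA]; linarith
      rw [max_eq_left (by linarith)]
      exact Real.one_le_rpow h1 hr0.le
    calc (1:ℝ) ≤ ∑ _i : Fin m, (1:ℝ) := by
          rw [Finset.sum_const, Finset.card_univ, Fintype.card_fin, nsmul_eq_mul]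
          exact le_mul_of_one_le_left one_pos.le (by exact_mod_cast hm)
      _ ≤ f A := Finset.sum_le_sum this
  obtain ⟨τ, hτmem, hτ⟩ : ∃ τ ∈ Set.Icc A B, f τ = 1 := by
    have := intermediate_value_Icc' hAB hcont.continuousOn
    have h1 : (1:ℝ) ∈ Set.Icc (f B) (f A) := ⟨by rw [hfB]; norm_num, hfA⟩
    obtain ⟨τ, hτ1, hτ2⟩ := this h1
    exact ⟨τ, hτ1, hτ2⟩
  refine ⟨τ, hτ, ?_⟩
  intro y hy
  by_contra hne'
  have hy' : f y = 1 := hy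
  rcases lt_or_gt_of_ne hne' with h | h
  · have := hstrict y τ h hy'
    linarith
  · have := hstrict τ y h hτ
    linarith
end

section
/- Let z ∈ R^m, r ≥ 1, and α = 1 + 1/r. The vector p with p_i = ([(α−1)z_i − τ]_+)^{1/(α−1)}, where τ is chosen so that Σ_i p_i = 1, is the unique maximizer over the simplex Δ_m of the objective ⟨z, p⟩ + H_α(p), where H_α(p) = (1/(α(α−1)))(1 − Σ_i p_i^α) is the Tsallis α-entropy. -/
/-!
Write `aᵢ = (α - 1) zᵢ - τ`. On the simplex, `⟨z, q⟩ + H_α(q)` equals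
`(∑ᵢ (α aᵢ qᵢ - qᵢ ^ α) + α τ + 1) / (α (α - 1))`, and the sum separates over coordinates.
Since `t ↦ t ^ α` is strictly convex, its tangent line at `s = [aᵢ]₊ ^ (1 / (α - 1))` (where the
slope is `α aᵢ` when `aᵢ > 0`) shows that `t ↦ α aᵢ t - t ^ α` has `s` as its unique maximizer on
`t ≥ 0`; when `aᵢ ≤ 0` the maximizer is `0` directly. Summing gives the strict maximality of `p`.
-/

open Finset

theorem rpow_add_mul_rpow_sub_one_mul_lt {α s t : ℝ} (hα : 1 < α) (hs : 0 < s) (ht : 0 ≤ t)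
    (hts : t ≠ s) : s ^ α + α * s ^ (α - 1) * (t - s) < t ^ α := by
  have hbern := one_add_mul_self_lt_rpow_one_add
    (by linarith [div_nonneg ht hs.le] : -1 ≤ t / s - 1)
    (by rwa [sub_ne_zero, ne_eq, div_eq_one_iff_eq hs.ne'] : t / s - 1 ≠ 0) hα
  rw [add_sub_cancel, Real.div_rpow ht hs.le, lt_div_iff₀ (by positivity)] at hbern
  have hsα : s ^ α = s ^ (α - 1) * s := by
    rw [← Real.rpow_add_one hs.ne', sub_add_cancel]
  calc s ^ α + α * s ^ (α - 1) * (t - s) = (1 + α * (t / s - 1)) * s ^ α := by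
        rw [hsα]; field_simp
    _ < t ^ α := hbern

theorem mul_sub_rpow_lt_of_ne {α a s t : ℝ} (hα : 1 < α) (hs : s = max a 0 ^ (1 / (α - 1)))
    (ht : 0 ≤ t) (hne : t ≠ s) : α * a * t - t ^ α < α * a * s - s ^ α := by
  have hα1 : 0 < α - 1 := by linarith
  rcases le_or_gt a 0 with ha | ha
  · have hs0 : s = 0 := by
      rw [hs, max_eq_right ha, Real.zero_rpow (one_div_pos.mpr hα1).ne']
    have htpos : 0 < t := lt_of_le_of_ne ht (hs0 ▸ hne).symm
    rw [hs0, Real.zero_rpow (by linarith)]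
    nlinarith [Real.rpow_pos_of_pos htpos α, mul_nonpos_of_nonpos_of_nonneg ha ht]
  · have hsa : s ^ (α - 1) = a := by
      rw [hs, max_eq_left ha.le, one_div, Real.rpow_inv_rpow ha.le hα1.ne']
    have hspos : 0 < s := hs ▸ Real.rpow_pos_of_pos (lt_max_of_lt_left ha) _
    have := rpow_add_mul_rpow_sub_one_mul_lt hα hspos ht hne
    rw [hsa] at this
    linarith

theorem mul_sub_rpow_le {α a s t : ℝ} (hα : 1 < α) (hs : s = max a 0 ^ (1 / (α - 1)))
    (ht : 0 ≤ t) : α * a * t - t ^ α ≤ α * a * s - s ^ α := by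
  rcases eq_or_ne t s with rfl | hne
  · exact le_rfl
  · exact (mul_sub_rpow_lt_of_ne hα hs ht hne).le

section

variable {ι : Type*} [Fintype ι]

noncomputable def tsallisEntropy (α : ℝ) (q : ι → ℝ) : ℝ :=
  1 / (α * (α - 1)) * (1 - ∑ i, q i ^ α)

theorem inner_add_tsallisEntropy_eq {α : ℝ} (hα₀ : α ≠ 0) (hα₁ : α ≠ 1) (τ : ℝ) (z q : ι → ℝ)
    (hq : ∑ i, q i = 1) :
    ∑ i, z i * q i + tsallisEntropy α q =
      (∑ i, (α * ((α - 1) * z i - τ) * q i - q i ^ α) + α * τ + 1) / (α * (α - 1)) := by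
  have : α - 1 ≠ 0 := sub_ne_zero.mpr hα₁
  simp only [tsallisEntropy, sum_sub_distrib, mul_sub, sub_mul, mul_assoc, ← mul_sum, hq]
  field_simp
  ring

theorem inner_add_tsallisEntropy_lt_of_ne {α τ : ℝ} (hα : 1 < α) {z p q : ι → ℝ}
    (hp : ∀ i, p i = max ((α - 1) * z i - τ) 0 ^ (1 / (α - 1))) (hpsum : ∑ i, p i = 1)
    (hq : ∀ i, 0 ≤ q i) (hqsum : ∑ i, q i = 1) (hne : q ≠ p) :
    ∑ i, z i * q i + tsallisEntropy α q < ∑ i, z i * p i + tsallisEntropy α p := by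
  have hα₀ : α ≠ 0 := by linarith
  rw [inner_add_tsallisEntropy_eq hα₀ hα.ne' τ z q hqsum,
    inner_add_tsallisEntropy_eq hα₀ hα.ne' τ z p hpsum]
  obtain ⟨i, hi⟩ := Function.ne_iff.mp hne
  have hsum := sum_lt_sum (fun j _ => mul_sub_rpow_le hα (hp j) (hq j))
    ⟨i, mem_univ i, mul_sub_rpow_lt_of_ne hα (hp i) (hq i) hi⟩
  gcongr

end

theorem stmt5_general (m : ℕ) (z : Fin m → ℝ) (r : ℝ) (hr : 1 ≤ r)
    (α : ℝ) (hα : α = 1 + 1/r) (τ : ℝ)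
    (p : Fin m → ℝ)
    (hp : ∀ i, p i = (max ((α - 1) * z i - τ) 0) ^ (1/(α - 1)))
    (hsum : ∑ i, p i = 1) :
    ((∀ i, 0 ≤ p i) ∧ ∑ i, p i = 1) ∧
      ∀ p' : Fin m → ℝ, (∀ i, 0 ≤ p' i) → (∑ i, p' i = 1) →
        ((∑ i, z i * p' i) + (1/(α * (α - 1))) * (1 - ∑ i, (p' i) ^ α)
          ≤ (∑ i, z i * p i) + (1/(α * (α - 1))) * (1 - ∑ i, (p i) ^ α)) ∧
        ((∑ i, z i * p' i) + (1/(α * (α - 1))) * (1 - ∑ i, (p' i) ^ α)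
          = (∑ i, z i * p i) + (1/(α * (α - 1))) * (1 - ∑ i, (p i) ^ α) → p' = p) := by
  have hα₁ : 1 < α := by
    have : 0 < 1 / r := one_div_pos.mpr (by linarith)
    linarith
  have hp₀ : ∀ i, 0 ≤ p i := fun i => (hp i) ▸ Real.rpow_nonneg (le_max_right _ _) _
  refine ⟨⟨hp₀, hsum⟩, fun q hq hqsum => ?_⟩
  have hlt : q ≠ p → ∑ i, z i * q i + tsallisEntropy α q < ∑ i, z i * p i + tsallisEntropy α p :=
    inner_add_tsallisEntropy_lt_of_ne hα₁ hp hsum hq hqsum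
  refine ⟨?_, fun heq => not_ne_iff.mp fun hne => (hlt hne).ne heq⟩
  rcases eq_or_ne q p with rfl | hne
  · exact le_rfl
  · exact (hlt hne).le

theorem stmt5 (m : ℕ) (hm : 0 < m) (z : Fin m → ℝ) (r : ℝ) (hr : 1 ≤ r)
    (α : ℝ) (hα : α = 1 + 1/r) (τ : ℝ)
    (p : Fin m → ℝ)
    (hp : ∀ i, p i = (max ((α - 1) * z i - τ) 0) ^ (1/(α - 1)))
    (hsum : ∑ i, p i = 1) :
    ((∀ i, 0 ≤ p i) ∧ ∑ i, p i = 1) ∧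
      ∀ p' : Fin m → ℝ, (∀ i, 0 ≤ p' i) → (∑ i, p' i = 1) →
        ((∑ i, z i * p' i) + (1/(α * (α - 1))) * (1 - ∑ i, (p' i) ^ α)
          ≤ (∑ i, z i * p i) + (1/(α * (α - 1))) * (1 - ∑ i, (p i) ^ α)) ∧
        ((∑ i, z i * p' i) + (1/(α * (α - 1))) * (1 - ∑ i, (p' i) ^ α)
          = (∑ i, z i * p i) + (1/(α * (α - 1))) * (1 - ∑ i, (p i) ^ α) → p' = p) :=
  stmt5_general m z r hr α hα τ p hp hsum
end

section
/- Let k_1,…,k_m, q ∈ R^d be unit vectors, γ > 0, and let τ be the sparsemax threshold for the score vector z with z_i = ⟨k_i,q⟩/γ, so that Σ_i [z_i − τ]_+ = 1. Set h = √(2 − 2γτ) (assuming 2 − 2γτ > 0). Then for each i, sparsemax(z)_i = [1 − ‖k_i − q‖²/h²]_+ · (h²/(2γ)), so the sparsemax attention weights are proportional to Epanechnikov kernel evaluations [1 − ‖k_i − q‖²/h²]_+. -/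
open scoped RealInnerProductSpace

/-- On the unit sphere the score `⟪k, q⟫` is an affine function of `‖k - q‖²`, so a shifted score
is a rescaled Epanechnikov profile whose bandwidth `h` absorbs the shift `τ`. -/
lemma inner_div_sub_eq_epanechnikov_mul {E : Type*} [NormedAddCommGroup E] [InnerProductSpace ℝ E]
    {k q : E} (hk : ‖k‖ = 1) (hq : ‖q‖ = 1) {γ τ h : ℝ} (hγ : γ ≠ 0) (hh0 : h ≠ 0)
    (hh : h ^ 2 = 2 - 2 * γ * τ) :
    ⟪k, q⟫ / γ - τ = (1 - ‖k - q‖ ^ 2 / h ^ 2) * (h ^ 2 / (2 * γ)) := by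
  have hdist : ‖k - q‖ ^ 2 = 2 - 2 * ⟪k, q⟫ := by
    rw [norm_sub_sq_real, hk, hq]; ring
  rw [hdist]
  field_simp
  rw [hh]
  ring

theorem stmt7_general (d m : ℕ) (k : Fin m → EuclideanSpace ℝ (Fin d))
    (q : EuclideanSpace ℝ (Fin d)) (γ : ℝ) (hγ : 0 < γ)
    (hk : ∀ i, ‖k i‖ = 1) (hq : ‖q‖ = 1)
    (z : Fin m → ℝ) (hz : ∀ i, z i = ⟪k i, q⟫ / γ)
    (τ : ℝ)
    (hpos : 0 < 2 - 2 * γ * τ)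
    (h : ℝ) (hh : h = Real.sqrt (2 - 2 * γ * τ)) :
    ∀ i, max (z i - τ) 0 = max (1 - ‖k i - q‖^2 / h^2) 0 * (h^2 / (2 * γ)) := by
  intro i
  have hsq : h ^ 2 = 2 - 2 * γ * τ := by rw [hh, Real.sq_sqrt hpos.le]
  have hh0 : h ≠ 0 := by rw [hh]; exact (Real.sqrt_pos.mpr hpos).ne'
  rw [hz i, inner_div_sub_eq_epanechnikov_mul (hk i) hq hγ.ne' hh0 hsq,
    max_mul_of_nonneg _ _ (by positivity), zero_mul]

theorem stmt7 (d m : ℕ) (k : Fin m → EuclideanSpace ℝ (Fin d))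
    (q : EuclideanSpace ℝ (Fin d)) (γ : ℝ) (hγ : 0 < γ)
    (hk : ∀ i, ‖k i‖ = 1) (hq : ‖q‖ = 1)
    (z : Fin m → ℝ) (hz : ∀ i, z i = ⟪k i, q⟫ / γ)
    (τ : ℝ) (hτ : ∑ i, max (z i - τ) 0 = 1)
    (hpos : 0 < 2 - 2 * γ * τ)
    (h : ℝ) (hh : h = Real.sqrt (2 - 2 * γ * τ)) :
    ∀ i, max (z i - τ) 0 = max (1 - ‖k i - q‖^2 / h^2) 0 * (h^2 / (2 * γ)) :=
  stmt7_general d m k q γ hγ hk hq z hz τ hpos h hh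
end

section
/- Let r ≥ 1, α = 1 + 1/r, unit vectors k_1,…,k_m, q ∈ R^d, temperature γ > 0, and let τ be the α-entmax threshold so that Σ_i ([⟨k_i,q⟩/(rγ) − τ]_+)^r = 1. Set h = √(2 − 2rγτ) (assuming 2 − 2rγτ > 0). Then for all values v_1,…,v_m ∈ R^d, the α-entmax attention output Σ_i ([⟨k_i,q⟩/(rγ) − τ]_+)^r · v_i equals the Nadaraya-Watson estimate Σ_i K_h(k_i − q) v_i / Σ_j K_h(k_j − q) with the rectified polynomial kernel K_h(u) = [1 − ‖u‖²/h²]_+^r. -/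
/-!
On the unit sphere `‖k - q‖² = 2 - 2⟪k, q⟫`, so the kernel argument `1 - ‖k - q‖² / h²` is an
affine function of the score `⟪k, q⟫`. The choice `h² = 2 - 2rγτ` makes it exactly the positive
multiple `(2rγ / h²) (⟪k, q⟫ / (rγ) - τ)` of the entmax argument. Rectification and the `r`-th power
commute with positive scaling, so every kernel weight is the same constant times the corresponding
entmax weight, and that constant cancels in the Nadaraya-Watson normalization because the entmax
weights already sum to one.
-/

open scoped RealInnerProductSpace

lemma norm_sub_sq_eq_two_sub_two_inner {E : Type*} [NormedAddCommGroup E] [InnerProductSpace ℝ E]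
    {x y : E} (hx : ‖x‖ = 1) (hy : ‖y‖ = 1) : ‖x - y‖ ^ 2 = 2 - 2 * ⟪x, y⟫ := by
  rw [norm_sub_sq_real, hx, hy]
  ring

lemma one_sub_norm_sub_sq_div_eq_mul {E : Type*} [NormedAddCommGroup E] [InnerProductSpace ℝ E]
    {x y : E} (hx : ‖x‖ = 1) (hy : ‖y‖ = 1) {s τ h : ℝ} (hs : s ≠ 0) (hh : h ^ 2 = 2 - 2 * s * τ)
    (hh0 : h ^ 2 ≠ 0) :
    1 - ‖x - y‖ ^ 2 / h ^ 2 = 2 * s / h ^ 2 * (⟪x, y⟫ / s - τ) := by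
  rw [norm_sub_sq_eq_two_sub_two_inner hx hy]
  field_simp
  rw [eq_div_iff hh0, sub_mul, div_mul_cancel₀ _ hh0]
  linear_combination hh

lemma max_mul_zero_rpow {c : ℝ} (hc : 0 ≤ c) (x r : ℝ) :
    max (c * x) 0 ^ r = c ^ r * max x 0 ^ r := by
  rw [← Real.mul_rpow hc (le_max_right _ _), mul_max_of_nonneg _ _ hc, mul_zero]

lemma Finset.inv_sum_smul_sum_smul_of_proportional {ι 𝕜 E : Type*} [Field 𝕜] [AddCommGroup E]
    [Module 𝕜 E] (s : Finset ι) {p w : ι → 𝕜} {c : 𝕜} (hc : c ≠ 0) (hw : ∀ i, w i = c * p i)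
    (hp : ∑ i ∈ s, p i = 1) (v : ι → E) :
    (∑ i ∈ s, w i)⁻¹ • ∑ i ∈ s, w i • v i = ∑ i ∈ s, p i • v i := by
  simp only [hw, ← Finset.mul_sum, hp, mul_one, mul_smul, ← Finset.smul_sum]
  rw [smul_smul, inv_mul_cancel₀ hc, one_smul]

theorem stmt8 (d m : ℕ) (r : ℝ) (hr : 1 ≤ r)
    (k : Fin m → EuclideanSpace ℝ (Fin d)) (q : EuclideanSpace ℝ (Fin d))
    (hk : ∀ i, ‖k i‖ = 1) (hq : ‖q‖ = 1)
    (γ : ℝ) (hγ : 0 < γ)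
    (τ : ℝ) (hτ : ∑ i, (max (⟪k i, q⟫ / (r * γ) - τ) 0) ^ r = 1)
    (hpos : 0 < 2 - 2 * r * γ * τ)
    (h : ℝ) (hh : h = Real.sqrt (2 - 2 * r * γ * τ))
    (v : Fin m → EuclideanSpace ℝ (Fin d)) :
    ∑ i, (max (⟪k i, q⟫ / (r * γ) - τ) 0) ^ r • v i =
      (∑ j, (max (1 - ‖k j - q‖^2 / h^2) 0) ^ r)⁻¹ •
        ∑ i, (max (1 - ‖k i - q‖^2 / h^2) 0) ^ r • v i := by
  have hrγ : 0 < r * γ := mul_pos (by linarith) hγ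
  have hh2 : h ^ 2 = 2 - 2 * r * γ * τ := by rw [hh, Real.sq_sqrt hpos.le]
  have hc : 0 < 2 * (r * γ) / h ^ 2 := by rw [hh2]; positivity
  refine (Finset.inv_sum_smul_sum_smul_of_proportional _
    (Real.rpow_pos_of_pos hc r).ne' (fun i => ?_) hτ v).symm
  rw [one_sub_norm_sub_sq_div_eq_mul (hk i) hq (τ := τ) hrγ.ne' (by rw [hh2]; ring)
    (hh2 ▸ hpos.ne'), max_mul_zero_rpow hc.le]
end

section
/- Normalized ReLU attention equals Epanechnikov kernel regression: for unit vectors k_1,…,k_m, q ∈ R^d, bandwidth h > 0 with γ = h²/2 and b = 1 − 2/h², suppose Σ_j [⟨k_j,q⟩/γ + b]_+ > 0. Then for all values v_i, Σ_i ([1 − ‖k_i − q‖²/h²]_+ / Σ_j [1 − ‖k_j − q‖²/h²]_+) v_i = Σ_i ([⟨k_i,q⟩/γ + b]_+ / Σ_j [⟨k_j,q⟩/γ + b]_+) v_i. -/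
open scoped RealInnerProductSpace

theorem stmt19 (d m : ℕ) (k : Fin m → EuclideanSpace ℝ (Fin d))
    (q : EuclideanSpace ℝ (Fin d))
    (hk : ∀ i, ‖k i‖ = 1) (hq : ‖q‖ = 1)
    (h : ℝ) (hh : 0 < h)
    (γ : ℝ) (hγ : γ = h^2 / 2) (b : ℝ) (hb : b = 1 - 2 / h^2)
    (hden : 0 < ∑ j, max (⟪k j, q⟫ / γ + b) 0)
    (v : Fin m → EuclideanSpace ℝ (Fin d)) :
    ∑ i, (max (1 - ‖k i - q‖^2 / h^2) 0 / ∑ j, max (1 - ‖k j - q‖^2 / h^2) 0) • v i =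
      ∑ i, (max (⟪k i, q⟫ / γ + b) 0 / ∑ j, max (⟪k j, q⟫ / γ + b) 0) • v i := by
  have key : ∀ i, 1 - ‖k i - q‖^2 / h^2 = ⟪k i, q⟫ / γ + b := by
    intro i
    have := norm_sub_sq_real (k i) q
    rw [hk i, hq] at this
    rw [this, hγ, hb]
    have hh2 : h^2 ≠ 0 := pow_ne_zero _ hh.ne'
    field_simp
    ring
  simp only [key]
end
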